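/- arXiv:1807.04684 — 2 statements merged into one kernel-verified Lean document; each statement's English description precedes it below -/
import Mathlib

section
/- Let 1 < α < 2 and let L_n denote the degree-n Legendre polynomial. Then for every integer n ≥ 0 and every x ∈ (−1,1): (d/dx)(I_l^{2−α} L_n)(x) = r_{nα} (1+x)^{1−α} P_n^{α−1, 1−α}(x) and −(d/dx)(I_r^{2−α} L_n)(x) = r_{nα} (1−x)^{1−α} P_n^{1−α, α−1}(x), where r_{nα} = Γ(n+1)/Γ(n+2−α); i.e., the left and right Riemann–Liouville derivatives of order α−1 of L_n are weighted Jacobi polynomials. -/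
/-! Expanding `L_n` in powers of `1 - y`, the right fractional integral acts termwise through the
Beta integral `∫_x^1 (y - x)^(σ-1) (1 - y)^m dy = m! Γ(σ) / Γ(σ + m + 1) (1 - x)^(σ + m)`;
differentiating gives the right-hand formula coefficient by coefficient. The reflection `y ↦ -y`
turns the left integral into the right one, and the parity of `L_n` together with the symmetry
`P_n^{a,b}(x) = (-1)^n P_n^{b,a}(-x)` (a Chu–Vandermonde identity for the coefficients) gives
the left-hand formula. -/

open MeasureTheory Real Set Finset

noncomputable section

/-- The interval Λ = (−1, 1). -/
def Lam : Set ℝ := Set.Ioo (-1 : ℝ) 1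

/-- Left Riemann–Liouville fractional integral of order `σ` on `(−1,1)`;
`Il 0` is the identity. -/
def Il (σ : ℝ) (v : ℝ → ℝ) (x : ℝ) : ℝ :=
  if σ = 0 then v x
  else (1 / Real.Gamma σ) * ∫ y in (-1 : ℝ)..x, (x - y) ^ (σ - 1) * v y

/-- Right Riemann–Liouville fractional integral of order `σ` on `(−1,1)`;
`Ir 0` is the identity. -/
def Ir (σ : ℝ) (v : ℝ → ℝ) (x : ℝ) : ℝ :=
  if σ = 0 then v x
  else (1 / Real.Gamma σ) * ∫ y in x..(1 : ℝ), (y - x) ^ (σ - 1) * v y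

/-- The constant `C_{α,p} = (sin(πμ) + sin(πν)) / sin(πα)`. -/
def Cap (α μ ν : ℝ) : ℝ := (Real.sin (π * μ) + Real.sin (π * ν)) / Real.sin (π * α)

/-- Two-sided fractional integral `I_p^σ v = C_{α,p}(p I_l^σ v + (1−p) I_r^σ v)`. -/
def Ip (α μ ν p σ : ℝ) (v : ℝ → ℝ) (x : ℝ) : ℝ :=
  Cap α μ ν * (p * Il σ v x + (1 - p) * Ir σ v x)

/-- Two-sided Riemann–Liouville fractional derivative of order `α − 1`. -/
def Dp (α μ ν p : ℝ) (v : ℝ → ℝ) : ℝ → ℝ := deriv (Ip α μ ν p (2 - α) v)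

/-- Jacobi polynomial `P_n^{a,b}` given by its explicit hypergeometric sum. -/
def jacobiP (n : ℕ) (a b : ℝ) (x : ℝ) : ℝ :=
  ∑ m ∈ Finset.range (n + 1),
    (Real.Gamma (a + n + 1) * Real.Gamma (a + b + n + m + 1)) /
      ((m.factorial : ℝ) * ((n - m).factorial : ℝ) * Real.Gamma (a + b + n + 1) *
        Real.Gamma (a + m + 1)) * ((x - 1) / 2) ^ m

/-- Jacobi poly-fractonomial `J_n^{−a,−b}(x) = (1−x)^a (1+x)^b P_n^{a,b}(x)`. -/
def Jpf (n : ℕ) (a b : ℝ) (x : ℝ) : ℝ :=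
  (1 - x) ^ a * (1 + x) ^ b * jacobiP n a b x

/-- Membership in the fractional derivative space `H_RL^{α−1}(Λ)`. -/
def MemH (α μ ν p : ℝ) (v : ℝ → ℝ) : Prop :=
  IntegrableOn (fun x => (Ip α μ ν p (2 - α) v x) ^ 2) Lam ∧
    IntegrableOn (fun x => (Dp α μ ν p v x) ^ 2) Lam

/-- Squared norm of `H_RL^{α−1}(Λ)`. -/
def HnormSq (α μ ν p : ℝ) (v : ℝ → ℝ) : ℝ :=
  (∫ x in Lam, (Ip α μ ν p (2 - α) v x) ^ 2) + ∫ x in Lam, (Dp α μ ν p v x) ^ 2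

/-- The bilinear form `A(u,v) = c(u, I_p^{2−α}v) + (D_p^{α−1}u, D_p^{α−1}v)`. -/
def Aform (α μ ν p c : ℝ) (u v : ℝ → ℝ) : ℝ :=
  c * (∫ x in Lam, u x * Ip α μ ν p (2 - α) v x) +
    ∫ x in Lam, Dp α μ ν p u x * Dp α μ ν p v x

/-- Incomplete Fourier transform `F^c(w)(ξ) = (1/2π) ∫_{−1}^1 w(x) e^{iξx} dx`. -/
def Fc (w : ℝ → ℝ) (ξ : ℝ) : ℂ :=
  ((1 / (2 * π) : ℝ) : ℂ) *
    ∫ x in (-1 : ℝ)..1, (w x : ℂ) * Complex.exp (Complex.I * ξ * x)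


open Polynomial

theorem descPochhammer_eval_add (r s : ℝ) (k : ℕ) :
    (descPochhammer ℝ k).eval (r + s) = ∑ i ∈ range (k + 1),
      k.choose i * ((descPochhammer ℝ i).eval r * (descPochhammer ℝ (k - i)).eval s) := by
  have h (t : ℝ) (j : ℕ) : (descPochhammer ℤ j).smeval t = (descPochhammer ℝ j).eval t := by
    rw [← aeval_eq_smeval, aeval_def, ← eval_map, descPochhammer_map]
  simpa only [h, Nat.sum_antidiagonal_eq_sum_range_succ_mk] using
    Ring.descPochhammer_smeval_add k (Commute.all r s)

theorem descPochhammer_eval_neg (r : ℝ) (k : ℕ) :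
    (descPochhammer ℝ k).eval (-r) = (-1) ^ k * (ascPochhammer ℝ k).eval r := by
  rw [← neg_neg r, ascPochhammer_eval_neg_eq_descPochhammer, neg_neg, ← mul_assoc, ← mul_pow]
  simp

theorem Gamma_add_nat_eq_mul_ascPochhammer {c : ℝ} (hc : 0 < c) (k : ℕ) :
    Gamma (c + k) = Gamma c * (ascPochhammer ℝ k).eval c := by
  induction k with
  | zero => simp
  | succ k ih =>
    rw [Nat.cast_succ, ← add_assoc, Gamma_add_one (by positivity), ih, ascPochhammer_succ_eval]
    ring

theorem Gamma_add_one_eq_mul_descPochhammer {r : ℝ} {k : ℕ} (h : 0 < r - k + 1) :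
    Gamma (r + 1) = Gamma (r - k + 1) * (descPochhammer ℝ k).eval r := by
  rw [descPochhammer_eval_eq_ascPochhammer, ← Gamma_add_nat_eq_mul_ascPochhammer h]
  ring_nf

/-- `jacobiP` with its quotients of Gamma values written as Pochhammer symbols: a polynomial in
`a`, `b` and `x`, with no restriction on the parameters. -/
def jacobiPoch (n : ℕ) (a b x : ℝ) : ℝ :=
  ∑ m ∈ range (n + 1), n.choose m / n.factorial * (descPochhammer ℝ (n - m)).eval (a + n) *
    (ascPochhammer ℝ m).eval (a + b + n + 1) * ((x - 1) / 2) ^ m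

theorem jacobiP_eq_jacobiPoch (n : ℕ) {a b : ℝ} (ha : -1 < a) (hab : 0 < a + b + n + 1)
    (x : ℝ) : jacobiP n a b x = jacobiPoch n a b x := by
  refine sum_congr rfl fun m hm => ?_
  have hmn : m ≤ n := Nat.lt_succ_iff.mp (mem_range.mp hm)
  have ham : 0 < a + m + 1 := by linarith [(m.cast_nonneg : (0 : ℝ) ≤ m)]
  have hGa : Gamma (a + n + 1) =
      Gamma (a + m + 1) * (descPochhammer ℝ (n - m)).eval (a + n) := by
    have key := Gamma_add_one_eq_mul_descPochhammer (r := a + n) (k := n - m)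
    rw [Nat.cast_sub hmn, show a + n - (n - m) + 1 = a + m + 1 by ring] at key
    exact key ham
  have hGab : Gamma (a + b + n + m + 1) =
      Gamma (a + b + n + 1) * (ascPochhammer ℝ m).eval (a + b + n + 1) := by
    rw [← Gamma_add_nat_eq_mul_ascPochhammer hab]
    ring_nf
  rw [hGa, hGab, Nat.cast_choose ℝ hmn]
  field_simp [(Gamma_pos_of_pos ham).ne']

/-- The coefficient of `((x + 1) / 2) ^ j` on the two sides of `jacobiPoch_neg`; the sum over `i`
is a Chu–Vandermonde sum. -/
theorem jacobiPoch_coeff {n j : ℕ} (hj : j ≤ n) (a b : ℝ) :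
    ∑ i ∈ range (n - j + 1), n.choose (j + i) / n.factorial *
        (descPochhammer ℝ (n - (j + i))).eval (a + n) *
        (ascPochhammer ℝ (j + i)).eval (a + b + n + 1) * ((-1) ^ i * (j + i).choose j) =
      (-1) ^ (n - j) * (n.choose j / n.factorial * (descPochhammer ℝ (n - j)).eval (b + n) *
        (ascPochhammer ℝ j).eval (b + a + n + 1)) := by
  set A := a + b + n + 1
  have hterm : ∀ i ∈ range (n - j + 1), n.choose (j + i) / n.factorial *
        (descPochhammer ℝ (n - (j + i))).eval (a + n) *
        (ascPochhammer ℝ (j + i)).eval A * ((-1) ^ i * (j + i).choose j) =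
      n.choose j / n.factorial * (ascPochhammer ℝ j).eval A * ((n - j).choose i *
        ((descPochhammer ℝ i).eval (-(A + j)) * (descPochhammer ℝ (n - j - i)).eval (a + n))) := by
    intro i _
    have hchoose : (n.choose (j + i) * (j + i).choose j : ℝ) = n.choose j * (n - j).choose i := by
      exact_mod_cast (Nat.choose_mul (Nat.le_add_right j i)).trans (by rw [Nat.add_sub_cancel_left])
    have hasc : (ascPochhammer ℝ (j + i)).eval A =
        (ascPochhammer ℝ j).eval A * (ascPochhammer ℝ i).eval (A + j) := by
      rw [← ascPochhammer_mul]
      simp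
    rw [descPochhammer_eval_neg, hasc, Nat.sub_sub]
    linear_combination (-1) ^ i / n.factorial * (descPochhammer ℝ (n - (j + i))).eval (a + n) *
      (ascPochhammer ℝ j).eval A * (ascPochhammer ℝ i).eval (A + j) * hchoose
  rw [sum_congr rfl hterm, ← mul_sum, ← descPochhammer_eval_add,
    show -(A + j) + (a + n) = -(b + j + 1) by ring, descPochhammer_eval_neg,
    descPochhammer_eval_eq_ascPochhammer (r := b + (n : ℝ)), Nat.cast_sub hj,
    show b + (n : ℝ) - ((n : ℝ) - j) + 1 = b + j + 1 by ring, show b + a + n + 1 = A by ring]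
  ring

theorem jacobiPoch_neg (n : ℕ) (a b x : ℝ) :
    jacobiPoch n a b x = (-1) ^ n * jacobiPoch n b a (-x) := by
  set t := (x + 1) / 2
  have hx : (x - 1) / 2 = t + -1 := by ring
  have hx' : (-x - 1) / 2 = -t := by ring
  simp only [jacobiPoch, hx, hx', add_pow, mul_sum, range_eq_Ico]
  rw [← sum_Ico_Ico_comm]
  refine sum_congr rfl fun j hj => ?_
  have hjn : j ≤ n := Nat.lt_succ_iff.mp (Finset.mem_Ico.mp hj).2
  have hsign : (-1 : ℝ) ^ n * (-t) ^ j = (-1) ^ (n - j) * t ^ j := by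
    have hsq : (-1 : ℝ) ^ j * (-1) ^ j = 1 := by rw [← mul_pow]; norm_num
    rw [neg_pow t, ← Nat.sub_add_cancel hjn, pow_add, Nat.add_sub_cancel]
    linear_combination (-1 : ℝ) ^ (n - j) * t ^ j * hsq
  rw [sum_Ico_eq_sum_range, show n + 1 - j = n - j + 1 by omega]
  simp only [Nat.add_sub_cancel_left]
  calc _ = t ^ j * ∑ i ∈ range (n - j + 1), n.choose (j + i) / n.factorial *
          (descPochhammer ℝ (n - (j + i))).eval (a + n) *
          (ascPochhammer ℝ (j + i)).eval (a + b + n + 1) * ((-1) ^ i * (j + i).choose j) := by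
        rw [mul_sum]
        exact sum_congr rfl fun i _ => by ring
    _ = _ := by
      rw [jacobiPoch_coeff hjn]
      linear_combination -(n.choose j / n.factorial * (descPochhammer ℝ (n - j)).eval (b + n) *
        (ascPochhammer ℝ j).eval (b + a + n + 1)) * hsign

theorem jacobiP_neg (n : ℕ) {a b : ℝ} (ha : -1 < a) (hb : -1 < b) (hab : 0 < a + b + n + 1)
    (x : ℝ) : jacobiP n a b x = (-1) ^ n * jacobiP n b a (-x) := by
  rw [jacobiP_eq_jacobiPoch n ha hab, jacobiP_eq_jacobiPoch n hb (by linarith), jacobiPoch_neg]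

theorem intervalIntegrable_sub_rpow_mul {σ : ℝ} (hσ : 0 < σ) {g : ℝ → ℝ} (hg : Continuous g)
    (x b : ℝ) : IntervalIntegrable (fun y => (y - x) ^ (σ - 1) * g y) volume x b := by
  have h := (intervalIntegral.intervalIntegrable_rpow' (a := x - x) (b := b - x)
    (r := σ - 1) (by linarith)).comp_sub_right x
  simpa only [sub_add_cancel] using h.mul_continuousOn hg.continuousOn

theorem integral_sub_rpow_mul_one_sub_pow (m : ℕ) {σ : ℝ} (hσ : 0 < σ) {x : ℝ} (hx : x ≤ 1) :
    ∫ y in x..1, (y - x) ^ (σ - 1) * (1 - y) ^ m =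
      m.factorial * Gamma σ / Gamma (σ + m + 1) * (1 - x) ^ (σ + m) := by
  induction m generalizing σ with
  | zero =>
    simp only [pow_zero, mul_one, Nat.factorial_zero, Nat.cast_one, CharP.cast_eq_zero, add_zero]
    rw [intervalIntegral.integral_comp_sub_right (fun y => y ^ (σ - 1)),
      integral_rpow (Or.inl (by linarith)), sub_self, sub_add_cancel, zero_rpow hσ.ne',
      Gamma_add_one hσ.ne']
    field_simp [(Gamma_pos_of_pos hσ).ne']
    ring
  | succ m ih =>
    have hsplit : ∀ y ∈ Set.uIcc x 1, (y - x) ^ (σ - 1) * (1 - y) ^ (m + 1) =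
        (1 - x) * ((y - x) ^ (σ - 1) * (1 - y) ^ m) - (y - x) ^ (σ + 1 - 1) * (1 - y) ^ m := by
      intro y hy
      rw [Set.uIcc_of_le hx] at hy
      rw [add_sub_cancel_right, show σ = (σ - 1) + 1 by ring,
        rpow_add' (by linarith [hy.1]) (by simpa using hσ.ne'), rpow_one, sub_add_cancel]
      ring
    rw [intervalIntegral.integral_congr hsplit, intervalIntegral.integral_sub
      ((intervalIntegrable_sub_rpow_mul hσ (by fun_prop) x 1).const_mul _)
      (intervalIntegrable_sub_rpow_mul (by linarith) (by fun_prop) x 1),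
      intervalIntegral.integral_const_mul, ih hσ, ih (by linarith)]
    have hpos : 0 < σ + m + 1 := by positivity
    rw [Nat.factorial_succ, Nat.cast_mul, Nat.cast_succ, show σ + 1 + m = σ + m + 1 by ring,
      show σ + (m + 1) = σ + m + 1 by ring, Gamma_add_one hpos.ne', Gamma_add_one hσ.ne',
      rpow_add' (by linarith) hpos.ne', rpow_one]
    field_simp [(Gamma_pos_of_pos hpos).ne']
    ring

theorem Ir_sum_one_sub_pow {σ : ℝ} (hσ : 0 < σ) (s : Finset ℕ) (c : ℕ → ℝ) {x : ℝ}
    (hx : x ≤ 1) :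
    Ir σ (fun y => ∑ m ∈ s, c m * (1 - y) ^ m) x =
      ∑ m ∈ s, c m * m.factorial / Gamma (σ + m + 1) * (1 - x) ^ (σ + m) := by
  have hint : ∀ m ∈ s,
      IntervalIntegrable (fun y => c m * ((y - x) ^ (σ - 1) * (1 - y) ^ m)) volume x 1 :=
    fun m _ => (intervalIntegrable_sub_rpow_mul hσ (by fun_prop) x 1).const_mul _
  simp only [Ir, if_neg hσ.ne', mul_sum, mul_left_comm _ (c _)]
  rw [intervalIntegral.integral_finsetSum hint, mul_sum]
  refine sum_congr rfl fun m _ => ?_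
  rw [intervalIntegral.integral_const_mul, integral_sub_rpow_mul_one_sub_pow m hσ hx]
  field_simp [(Gamma_pos_of_pos hσ).ne']

theorem hasDerivAt_Ir_sum_one_sub_pow {σ : ℝ} (hσ : 0 < σ) (s : Finset ℕ) (c : ℕ → ℝ) {x : ℝ}
    (hx : x < 1) :
    HasDerivAt (Ir σ (fun y => ∑ m ∈ s, c m * (1 - y) ^ m))
      (-∑ m ∈ s, c m * m.factorial / Gamma (σ + m) * (1 - x) ^ (σ + m - 1)) x := by
  have hIr : Ir σ (fun y => ∑ m ∈ s, c m * (1 - y) ^ m) =ᶠ[nhds x]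
      fun z => ∑ m ∈ s, c m * m.factorial / Gamma (σ + m + 1) * (1 - z) ^ (σ + m) :=
    Filter.eventuallyEq_of_mem (Iio_mem_nhds hx) fun z (hz : z < 1) =>
      Ir_sum_one_sub_pow hσ s c hz.le
  refine HasDerivAt.congr_of_eventuallyEq ?_ hIr
  rw [← sum_neg_distrib]
  refine HasDerivAt.fun_sum fun m _ => ?_
  have hpos : 0 < σ + m := by positivity
  refine ((((hasDerivAt_id x).const_sub 1).rpow_const (p := σ + m)
    (Or.inl (sub_pos.mpr hx).ne')).const_mul
      (c m * m.factorial / Gamma (σ + m + 1))).congr_deriv ?_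
  rw [Gamma_add_one hpos.ne', id]
  field_simp [(Gamma_pos_of_pos hpos).ne']

theorem jacobiP_zero_zero (n : ℕ) :
    jacobiP n 0 0 = fun y => ∑ m ∈ range (n + 1),
      ((n + m).factorial : ℝ) / (m.factorial ^ 2 * (n - m).factorial) * (-1 / 2) ^ m *
        (1 - y) ^ m := by
  funext y
  refine sum_congr rfl fun m _ => ?_
  simp only [zero_add, add_zero]
  rw [← Nat.cast_add, Gamma_nat_eq_factorial, Gamma_nat_eq_factorial, Gamma_nat_eq_factorial,
    show (y - 1) / 2 = -1 / 2 * (1 - y) by ring, mul_pow]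
  field_simp

theorem hasDerivAt_Ir_legendre {σ : ℝ} (hσ : 0 < σ) (n : ℕ) {x : ℝ} (hx : x < 1) :
    HasDerivAt (Ir σ (jacobiP n 0 0))
      (-(Gamma (n + 1) / Gamma (n + σ) * (1 - x) ^ (σ - 1) * jacobiP n (σ - 1) (1 - σ) x)) x := by
  rw [jacobiP_zero_zero]
  refine (hasDerivAt_Ir_sum_one_sub_pow hσ _ _ hx).congr_deriv ?_
  rw [jacobiP, mul_sum]
  congr 1
  refine sum_congr rfl fun m _ => ?_
  have hpos : 0 < σ + m := by positivity
  rw [show σ - 1 + n + 1 = n + σ by ring, show σ - 1 + m + 1 = σ + m by ring,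
    show σ - 1 + (1 - σ) + n + m + 1 = (n + m : ℕ) + 1 by push_cast; ring,
    show σ - 1 + (1 - σ) + n + 1 = n + 1 by ring, Gamma_nat_eq_factorial, Gamma_nat_eq_factorial,
    show σ + m - 1 = (σ - 1) + m by ring, rpow_add (by linarith), rpow_natCast,
    show (x - 1) / 2 = -1 / 2 * (1 - x) by ring, mul_pow]
  field_simp [(Gamma_pos_of_pos hpos).ne', (Gamma_pos_of_pos (show 0 < n + σ by positivity)).ne']

theorem Il_eq_Ir_comp_neg (σ : ℝ) (v : ℝ → ℝ) (x : ℝ) :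
    Il σ v x = Ir σ (fun y => v (-y)) (-x) := by
  unfold Il Ir
  split_ifs
  · simp only [neg_neg]
  · have h := intervalIntegral.integral_comp_neg (a := -x) (b := 1)
      (fun y => (x - y) ^ (σ - 1) * v y)
    simp only [neg_neg, sub_neg_eq_add] at h
    simp only [sub_neg_eq_add, add_comm _ x, h]

theorem Ir_const_mul (σ c : ℝ) (v : ℝ → ℝ) (x : ℝ) :
    Ir σ (fun y => c * v y) x = c * Ir σ v x := by
  unfold Ir
  split_ifs
  · rfl
  · simp only [mul_left_comm _ c, intervalIntegral.integral_const_mul]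

theorem hasDerivAt_Il_legendre {σ : ℝ} (hσ0 : 0 < σ) (hσ2 : σ < 2) (n : ℕ) {x : ℝ}
    (hx : -1 < x) :
    HasDerivAt (Il σ (jacobiP n 0 0))
      (Gamma (n + 1) / Gamma (n + σ) * (1 + x) ^ (σ - 1) * jacobiP n (1 - σ) (σ - 1) x) x := by
  have hparity : (fun y => jacobiP n 0 0 (-y)) = fun y => (-1) ^ n * jacobiP n 0 0 y := by
    funext y
    rw [jacobiP_neg n (by norm_num) (by norm_num) (by positivity), neg_neg]
  have hreflect : Il σ (jacobiP n 0 0) = fun z => (-1) ^ n * Ir σ (jacobiP n 0 0) (-z) := by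
    funext z
    rw [Il_eq_Ir_comp_neg, hparity, Ir_const_mul]
  rw [hreflect]
  refine (((hasDerivAt_Ir_legendre hσ0 n (x := -x) (by linarith)).comp x
    (hasDerivAt_neg x)).const_mul _).congr_deriv ?_
  rw [jacobiP_neg n (a := 1 - σ) (by linarith) (by linarith) (by ring_nf; positivity),
    sub_neg_eq_add]
  ring

theorem statement14 (α : ℝ) (hα1 : 1 < α) (hα2 : α < 2)
    (n : ℕ) (x : ℝ) (hx : x ∈ Set.Ioo (-1 : ℝ) 1) :
    deriv (Il (2 - α) (fun y => jacobiP n 0 0 y)) x =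
      (Real.Gamma (n + 1) / Real.Gamma (n + 2 - α)) * (1 + x) ^ (1 - α) *
        jacobiP n (α - 1) (1 - α) x ∧
    -deriv (Ir (2 - α) (fun y => jacobiP n 0 0 y)) x =
      (Real.Gamma (n + 1) / Real.Gamma (n + 2 - α)) * (1 - x) ^ (1 - α) *
        jacobiP n (1 - α) (α - 1) x := by
  have hσ : 0 < 2 - α := by linarith
  have hl := (hasDerivAt_Il_legendre hσ (by linarith) n hx.1).deriv
  have hr := (hasDerivAt_Ir_legendre hσ n hx.2).deriv
  rw [show (n : ℝ) + (2 - α) = n + 2 - α by ring, show 2 - α - 1 = 1 - α by ring,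
    show 1 - (2 - α) = α - 1 by ring] at hl hr
  exact ⟨hl, by rw [hr, neg_neg]⟩
end
end

section
/- Let 1 < α < 2 and let L_n denote the degree-n Legendre polynomial. Then for every integer n ≥ 0 and every x ∈ (−1,1): (I_l^{2−α} L_n)(x) = z_{nα} (1+x)^{2−α} P_n^{α−2, 2−α}(x) and (I_r^{2−α} L_n)(x) = z_{nα} (1−x)^{2−α} P_n^{2−α, α−2}(x), where z_{nα} = Γ(n+1)/Γ(n+3−α). -/
open MeasureTheory Real Set Finset

noncomputable section

lemma prodA (M : ℝ) (j : ℕ) :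
    ∏ u ∈ Finset.range (j+1), (M + u) = M * ∏ u ∈ Finset.range j, ((M+1) + u) := by
  rw [Finset.prod_range_succ']
  simp only [Nat.cast_zero, add_zero]
  rw [mul_comm]
  congr 1
  apply Finset.prod_congr rfl
  intro u _
  push_cast
  ring

lemma lemG (N : ℕ) : ∀ (M c : ℝ),
    ∑ j ∈ Finset.range (N + 1), (-1 : ℝ) ^ (N + j) * (N.choose j) *
      (∏ u ∈ Finset.range j, (M + u)) * (∏ t ∈ Finset.range (N - j), (c + j + t)) =
    ∏ t ∈ Finset.range N, (M - N + 1 + t - c) := by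
  induction N with
  | zero => intro M c; simp
  | succ N ih =>
      intro M c
      set f : ℕ → ℝ := fun j => (-1 : ℝ) ^ (N + 1 + j) * ((N+1).choose j) *
        (∏ u ∈ Finset.range j, (M + u)) * (∏ t ∈ Finset.range (N + 1 - j), (c + j + t)) with hf
      set h : ℕ → ℝ := fun j => (-1 : ℝ) ^ (N + 1 + j) * (N.choose j) *
        (∏ u ∈ Finset.range j, (M + u)) * (∏ t ∈ Finset.range (N + 1 - j), (c + j + t)) with hh
      have step1 : ∑ j ∈ Finset.range (N + 2), f j
          = (∑ j ∈ Finset.range (N + 1), (-1 : ℝ) ^ (N + j) * (N.choose j) *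
              (∏ u ∈ Finset.range (j+1), (M + u)) * (∏ t ∈ Finset.range (N - j), ((c+1) + j + t)))
            + ∑ j ∈ Finset.range (N + 2), h j := by
        rw [Finset.sum_range_succ' f (N+1), Finset.sum_range_succ' h (N+1)]
        have split : ∀ j ∈ Finset.range (N+1), f (j+1) =
            ((-1 : ℝ) ^ (N + j) * (N.choose j) *
              (∏ u ∈ Finset.range (j+1), (M + u)) * (∏ t ∈ Finset.range (N - j), ((c+1) + j + t)))
            + h (j+1) := by
          intro j hj
          have hjN : j ≤ N := Nat.lt_succ_iff.mp (Finset.mem_range.mp hj)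
          simp only [hf, hh]
          rw [Nat.choose_succ_succ N j]
          have h2 : N + 1 - (j + 1) = N - j := by omega
          rw [h2]
          have h3 : ∀ t ∈ Finset.range (N - j), (c + (j+1 : ℕ) + (t:ℝ)) = ((c+1) + j + t) := by
            intro t _; push_cast; ring
          rw [Finset.prod_congr rfl h3]
          push_cast
          ring
        rw [Finset.sum_congr rfl split, Finset.sum_add_distrib]
        have hf0 : f 0 = h 0 := by simp [hf, hh]
        rw [hf0]
        ring
      have step2 : ∑ j ∈ Finset.range (N + 2), h j
          = -(c + N) * ∑ j ∈ Finset.range (N + 1), (-1 : ℝ) ^ (N + j) * (N.choose j) *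
            (∏ u ∈ Finset.range j, (M + u)) * (∏ t ∈ Finset.range (N - j), (c + j + t)) := by
        rw [Finset.sum_range_succ, Finset.mul_sum]
        have hlast : h (N+1) = 0 := by simp [hh, Nat.choose_succ_self]
        rw [hlast, add_zero]
        apply Finset.sum_congr rfl
        intro j hj
        have hjN : j ≤ N := Nat.lt_succ_iff.mp (Finset.mem_range.mp hj)
        simp only [hh]
        have h2 : N + 1 - j = (N - j) + 1 := by omega
        rw [h2, Finset.prod_range_succ]
        have h3 : c + (j:ℝ) + ((N - j : ℕ) : ℝ) = c + N := by
          rw [Nat.cast_sub hjN]; ring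
        rw [h3]
        ring
      have step3 : ∑ j ∈ Finset.range (N + 1), (-1 : ℝ) ^ (N + j) * (N.choose j) *
            (∏ u ∈ Finset.range (j+1), (M + u)) * (∏ t ∈ Finset.range (N - j), ((c+1) + j + t))
          = M * ∑ j ∈ Finset.range (N + 1), (-1 : ℝ) ^ (N + j) * (N.choose j) *
            (∏ u ∈ Finset.range j, ((M+1) + u)) * (∏ t ∈ Finset.range (N - j), ((c+1) + j + t)) := by
        rw [Finset.mul_sum]
        apply Finset.sum_congr rfl
        intro j _
        rw [prodA]
        ring
      calc ∑ j ∈ Finset.range (N + 1 + 1), (-1 : ℝ) ^ (N + 1 + j) * ((N+1).choose j) *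
            (∏ u ∈ Finset.range j, (M + u)) * (∏ t ∈ Finset.range (N + 1 - j), (c + j + t))
          = ∑ j ∈ Finset.range (N + 2), f j := rfl
        _ = M * (∏ t ∈ Finset.range N, ((M+1) - N + 1 + t - (c+1)))
            - (c + N) * ∏ t ∈ Finset.range N, (M - N + 1 + t - c) := by
              rw [step1, step2, step3, ih (M+1) (c+1), ih M c]; ring
        _ = ∏ t ∈ Finset.range (N + 1), (M - ((N+1 : ℕ) : ℝ) + 1 + t - c) := by
              rw [Finset.prod_range_succ']
              have e : ∀ t ∈ Finset.range N, (M - ((N+1 : ℕ):ℝ) + 1 + ((t+1 : ℕ):ℝ) - c)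
                  = ((M+1) - N + 1 + t - (c+1)) := by intro t _; push_cast; ring
              rw [Finset.prod_congr rfl e]
              have pe : (∏ t ∈ Finset.range N, ((M+1) - (N:ℝ) + 1 + t - (c+1)))
                  = ∏ t ∈ Finset.range N, (M - (N:ℝ) + 1 + t - c) := by
                apply Finset.prod_congr rfl; intro t _; ring
              rw [pe]
              push_cast
              ring


lemma gamma_add_nat_prod (x : ℝ) (hx : 0 < x) (l : ℕ) :
    Real.Gamma (x + l) = Real.Gamma x * ∏ t ∈ Finset.range l, (x + t) := by
  induction l with
  | zero => simp
  | succ l ih =>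
      have h1 : x + (l + 1 : ℕ) = (x + l) + 1 := by push_cast; ring
      rw [h1, Real.Gamma_add_one (by positivity), Finset.prod_range_succ, ih]
      ring

-- normalized form when A + B = 0
lemma jacobiP_norm (n : ℕ) (A B x : ℝ) (h : A + B = 0) :
    jacobiP n A B x = ∑ m ∈ Finset.range (n + 1),
      Real.Gamma (A + n + 1) * Real.Gamma ((n : ℝ) + m + 1) /
        ((m.factorial : ℝ) * ((n - m).factorial : ℝ) * Real.Gamma ((n : ℝ) + 1) *
          Real.Gamma (A + m + 1)) * ((x - 1) / 2) ^ m := by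
  unfold jacobiP
  apply Finset.sum_congr rfl
  intro m _
  have e1 : A + B + (n : ℝ) + m + 1 = (n : ℝ) + m + 1 := by rw [h]; ring
  have e2 : A + B + (n : ℝ) + 1 = (n : ℝ) + 1 := by rw [h]; ring
  rw [e1, e2]

lemma coeff_id (n k : ℕ) (hk : k ≤ n) (a : ℝ) (ha0 : 0 ≤ a) (ha1 : a < 1) :
    ∑ m ∈ Finset.range (n + 1),
      Real.Gamma (a + n + 1) * Real.Gamma ((n : ℝ) + m + 1) /
        ((m.factorial : ℝ) * ((n - m).factorial : ℝ) * Real.Gamma ((n : ℝ) + 1) *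
          Real.Gamma (a + m + 1)) * (-1 : ℝ) ^ m * (m.choose k)
    = (-1 : ℝ) ^ n * (Real.Gamma (-a + n + 1) * Real.Gamma ((n : ℝ) + k + 1) /
        ((k.factorial : ℝ) * ((n - k).factorial : ℝ) * Real.Gamma ((n : ℝ) + 1) *
          Real.Gamma (-a + k + 1))) := by
  set N := n - k with hN
  have hnk : k + N = n := by omega
  set M : ℝ := (n : ℝ) + k + 1 with hM
  set c : ℝ := a + k + 1 with hc
  set C0 : ℝ := (-1 : ℝ) ^ (N + k) * Real.Gamma ((n : ℝ) + k + 1) /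
      ((k.factorial : ℝ) * Real.Gamma ((n : ℝ) + 1) * (N.factorial : ℝ)) with hC0
  -- drop the terms with m < k
  have hsub : Finset.Ico k (n + 1) ⊆ Finset.range (n + 1) := by
    intro m hm; simp only [Finset.mem_Ico] at hm; exact Finset.mem_range.mpr hm.2
  rw [← Finset.sum_subset hsub (by
    intro m hm hnotin
    simp only [Finset.mem_range] at hm
    simp only [Finset.mem_Ico, not_and, not_le] at hnotin
    have : m < k := by by_contra h'; exact absurd (hnotin (le_of_not_gt h')) (by omega)
    rw [Nat.choose_eq_zero_of_lt this]
    simp)]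
  rw [Finset.sum_Ico_eq_sum_range]
  have hrange : n + 1 - k = N + 1 := by omega
  rw [hrange]
  -- rewrite each term into lemG form
  have term_eq : ∀ j ∈ Finset.range (N + 1),
      Real.Gamma (a + n + 1) * Real.Gamma ((n : ℝ) + ((k + j : ℕ) : ℝ) + 1) /
        (((k + j).factorial : ℝ) * ((n - (k + j)).factorial : ℝ) * Real.Gamma ((n : ℝ) + 1) *
          Real.Gamma (a + ((k + j : ℕ) : ℝ) + 1)) * (-1 : ℝ) ^ (k + j) * ((k + j).choose k)
      = C0 * ((-1 : ℝ) ^ (N + j) * (N.choose j) *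
          (∏ u ∈ Finset.range j, (M + u)) * (∏ t ∈ Finset.range (N - j), (c + j + t))) := by
    intro j hj
    have hjN : j ≤ N := Nat.lt_succ_iff.mp (Finset.mem_range.mp hj)
    -- Gamma(n + (k+j) + 1) = Gamma M * prod
    have g1 : Real.Gamma ((n : ℝ) + ((k + j : ℕ) : ℝ) + 1) = Real.Gamma M * ∏ u ∈ Finset.range j, (M + u) := by
      rw [← gamma_add_nat_prod M (by positivity) j]
      congr 1; push_cast; ring
    -- Gamma(a + n + 1) = Gamma (c + j) * prod
    have g2 : Real.Gamma (a + n + 1)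
        = Real.Gamma (a + ((k + j : ℕ) : ℝ) + 1) * ∏ t ∈ Finset.range (N - j), (c + j + t) := by
      have key := gamma_add_nat_prod (a + ((k + j : ℕ) : ℝ) + 1) (by positivity) (N - j)
      have harg : a + ((k + j : ℕ) : ℝ) + 1 + ((N - j : ℕ) : ℝ) = a + n + 1 := by
        have e1 : ((N - j : ℕ) : ℝ) = (N : ℝ) - j := by rw [Nat.cast_sub hjN]
        have e2 : ((n : ℕ) : ℝ) = (k : ℝ) + N := by rw [← hnk]; push_cast; ring
        rw [e1, e2]; push_cast; ring
      rw [harg] at key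
      rw [key]
      congr 1
      apply Finset.prod_congr rfl
      intro t _
      rw [hc]; push_cast; ring
    -- factorial identities
    have f1 : ((k + j).choose k) * k.factorial * j.factorial = (k + j).factorial := by
      have := Nat.choose_mul_factorial_mul_factorial (Nat.le_add_right k j)
      simpa using this
    have f2 : (N.choose j) * j.factorial * (N - j).factorial = N.factorial :=
      Nat.choose_mul_factorial_mul_factorial hjN
    have f3 : n - (k + j) = N - j := by omega
    have hsgn : (-1 : ℝ) ^ (N + k) * (-1 : ℝ) ^ (N + j) = (-1 : ℝ) ^ (k + j) := by
      rw [← pow_add]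
      have h2 : N + k + (N + j) = 2 * N + (k + j) := by omega
      rw [h2, pow_add, pow_mul]
      norm_num
    rw [g1, g2, f3, hC0]
    have hgc : Real.Gamma (a + (k + j) + 1) ≠ 0 :=
      ne_of_gt (Real.Gamma_pos_of_pos (by positivity))
    have hgn : Real.Gamma ((n : ℝ) + 1) ≠ 0 :=
      ne_of_gt (Real.Gamma_pos_of_pos (by positivity))
    have hfk : (k.factorial : ℝ) ≠ 0 := by positivity
    have hfj : (j.factorial : ℝ) ≠ 0 := by positivity
    have hfNj : ((N - j).factorial : ℝ) ≠ 0 := by positivity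
    have hfkj : ((k + j).factorial : ℝ) ≠ 0 := by positivity
    have hfN : (N.factorial : ℝ) ≠ 0 := by positivity
    -- cast the factorial identities to ℝ
    have f1' : (((k + j).choose k : ℝ)) * (k.factorial : ℝ) * (j.factorial : ℝ)
        = ((k + j).factorial : ℝ) := by exact_mod_cast congrArg (fun z : ℕ => (z : ℝ)) f1
    have f2' : ((N.choose j : ℝ)) * (j.factorial : ℝ) * ((N - j).factorial : ℝ)
        = (N.factorial : ℝ) := by exact_mod_cast congrArg (fun z : ℕ => (z : ℝ)) f2
    rw [← hsgn]
    field_simp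
    rw [← f1', ← f2']
    ring
  rw [Finset.sum_congr rfl term_eq, ← Finset.mul_sum, lemG N M c]
  -- evaluate the product as a ratio of Gammas
  have hx0 : (0 : ℝ) < -a + k + 1 := by linarith
  have gk := gamma_add_nat_prod (-a + k + 1) hx0 N
  have harg2 : -a + (k : ℝ) + 1 + (N : ℕ) = -a + n + 1 := by
    have e2 : ((n : ℕ) : ℝ) = (k : ℝ) + N := by rw [← hnk]; push_cast; ring
    rw [e2]; ring
  rw [harg2] at gk
  have hprod : (∏ t ∈ Finset.range N, (M - N + 1 + t - c))
      = ∏ t ∈ Finset.range N, (-a + (k : ℝ) + 1 + t) := by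
    apply Finset.prod_congr rfl
    intro t _
    have e2 : ((n : ℕ) : ℝ) = (k : ℝ) + N := by rw [← hnk]; push_cast; ring
    rw [hM, hc, e2]; ring
  rw [hprod, hC0]
  have hsgn2 : (N + k) = n := by omega
  rw [hsgn2, gk]
  have hgk : Real.Gamma (-a + k + 1) ≠ 0 := ne_of_gt (Real.Gamma_pos_of_pos hx0)
  have hgn : Real.Gamma ((n : ℝ) + 1) ≠ 0 := ne_of_gt (Real.Gamma_pos_of_pos (by positivity))
  have hfk : (k.factorial : ℝ) ≠ 0 := by positivity
  have hfN : (N.factorial : ℝ) ≠ 0 := by positivity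
  field_simp
  ring

lemma jacobiP_reflect (n : ℕ) (a x : ℝ) (ha0 : 0 ≤ a) (ha1 : a < 1) :
    jacobiP n a (-a) (-x) = (-1 : ℝ) ^ n * jacobiP n (-a) a x := by
  rw [jacobiP_norm n a (-a) (-x) (by ring), jacobiP_norm n (-a) a x (by ring),
    Finset.mul_sum]
  set u : ℝ := (x - 1) / 2 with hu
  have lhs_eq : ∀ m ∈ Finset.range (n + 1),
      Real.Gamma (a + n + 1) * Real.Gamma ((n : ℝ) + m + 1) /
        ((m.factorial : ℝ) * ((n - m).factorial : ℝ) * Real.Gamma ((n : ℝ) + 1) *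
          Real.Gamma (a + m + 1)) * ((-x - 1) / 2) ^ m
      = ∑ k ∈ Finset.range (n + 1),
          (Real.Gamma (a + n + 1) * Real.Gamma ((n : ℝ) + m + 1) /
            ((m.factorial : ℝ) * ((n - m).factorial : ℝ) * Real.Gamma ((n : ℝ) + 1) *
              Real.Gamma (a + m + 1)) * (-1 : ℝ) ^ m * (m.choose k)) * u ^ k := by
    intro m hm
    have hmn : m + 1 ≤ n + 1 := Finset.mem_range.mp hm
    have expand : ((-x - 1) / 2 : ℝ) ^ m
        = ∑ k ∈ Finset.range (n + 1), (-1 : ℝ) ^ m * (m.choose k) * u ^ k := by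
      have base : ((-x - 1) / 2 : ℝ) = -(u + 1) := by rw [hu]; ring
      rw [base, neg_pow, add_pow]
      rw [← Finset.sum_subset (Finset.range_subset_range.mpr hmn) (fun k hk hk2 => by
        have hlt : m < k := by
          simp only [Finset.mem_range] at hk hk2; omega
        rw [Nat.choose_eq_zero_of_lt hlt]; simp)]
      rw [Finset.mul_sum]
      apply Finset.sum_congr rfl
      intro k _
      rw [one_pow]
      ring
    rw [expand, Finset.mul_sum]
    apply Finset.sum_congr rfl
    intro k _
    ring
  rw [Finset.sum_congr rfl lhs_eq, Finset.sum_comm]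
  apply Finset.sum_congr rfl
  intro k hk
  have hkn : k ≤ n := Nat.lt_succ_iff.mp (Finset.mem_range.mp hk)
  rw [← Finset.sum_mul, coeff_id n k hkn a ha0 ha1]
  ring


lemma betaR (σ : ℝ) (hσ : 0 < σ) (m : ℕ) :
    ∫ t in (0:ℝ)..1, t ^ (σ - 1) * (1 - t) ^ m
      = Real.Gamma σ * (m.factorial : ℝ) / Real.Gamma (σ + m + 1) := by
  have h := Complex.Gamma_mul_Gamma_eq_betaIntegral (s := (σ : ℂ)) (t := ((m : ℂ) + 1))
    (by simpa using hσ) (by simp; positivity)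
  have hbeta : Complex.betaIntegral (σ : ℂ) ((m : ℂ) + 1)
      = ((∫ t in (0:ℝ)..1, t ^ (σ - 1) * (1 - t) ^ m : ℝ) : ℂ) := by
    rw [Complex.betaIntegral, ← intervalIntegral.integral_ofReal]
    apply intervalIntegral.integral_congr
    intro t ht
    rw [Set.uIcc_of_le (by norm_num : (0:ℝ) ≤ 1)] at ht
    obtain ⟨ht0, _⟩ := ht
    have e1 : ((m : ℂ) + 1 - 1) = ((m : ℕ) : ℂ) := by ring
    show (t:ℂ) ^ ((σ:ℂ) - 1) * (1 - (t:ℂ)) ^ ((m:ℂ) + 1 - 1) = ((t ^ (σ - 1) * (1 - t) ^ m : ℝ) : ℂ)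
    rw [e1, Complex.cpow_natCast, Complex.ofReal_mul, Complex.ofReal_cpow ht0,
      Complex.ofReal_pow, Complex.ofReal_sub, Complex.ofReal_one]
    push_cast
    ring
  rw [hbeta] at h
  have e2 : ((σ : ℂ) + ((m : ℂ) + 1)) = ((σ + m + 1 : ℝ) : ℂ) := by push_cast; ring
  have e3 : ((m : ℂ) + 1) = (((m : ℝ) + 1 : ℝ) : ℂ) := by push_cast; ring
  rw [e2, e3, Complex.Gamma_ofReal, Complex.Gamma_ofReal, Complex.Gamma_ofReal] at h
  have h' : Real.Gamma σ * Real.Gamma ((m : ℝ) + 1)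
      = Real.Gamma (σ + m + 1) * ∫ t in (0:ℝ)..1, t ^ (σ - 1) * (1 - t) ^ m := by
    exact_mod_cast h
  have hfact : Real.Gamma ((m : ℝ) + 1) = (m.factorial : ℝ) := Real.Gamma_nat_eq_factorial m
  rw [hfact] at h'
  have hne : Real.Gamma (σ + m + 1) ≠ 0 :=
    ne_of_gt (Real.Gamma_pos_of_pos (by positivity))
  field_simp
  linarith [h']

lemma irIntegrable (σ x : ℝ) (hσ0 : 0 < σ) (cst : ℝ) (m : ℕ) :
    IntervalIntegrable (fun y => (y - x) ^ (σ - 1) * (cst * (1 - y) ^ m)) volume x 1 := by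
  have h1 : IntervalIntegrable (fun y : ℝ => y ^ (σ - 1)) volume 0 (1 - x) :=
    intervalIntegral.intervalIntegrable_rpow' (by linarith)
  have h2 := h1.comp_sub_right x
  have h3 : IntervalIntegrable (fun y : ℝ => (y - x) ^ (σ - 1)) volume x 1 := by
    have e1 : (0 : ℝ) + x = x := by ring
    have e2 : (1 - x) + x = 1 := by ring
    rwa [e1, e2] at h2
  exact h3.mul_continuousOn (by fun_prop)

lemma irCore (σ x : ℝ) (hσ0 : 0 < σ) (hx : x < 1) (m : ℕ) :
    ∫ y in x..1, (y - x) ^ (σ - 1) * (1 - y) ^ m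
      = (1 - x) ^ σ * (1 - x) ^ m * (Real.Gamma σ * (m.factorial : ℝ) / Real.Gamma (σ + m + 1)) := by
  set c : ℝ := 1 - x with hc
  have hc0 : 0 < c := by simp [hc]; linarith
  have hsub := intervalIntegral.integral_comp_mul_add
    (a := 0) (b := 1) (f := fun y => (y - x) ^ (σ - 1) * (1 - y) ^ m) (ne_of_gt hc0) x
  have e1 : c * 0 + x = x := by ring
  have e2 : c * 1 + x = 1 := by rw [hc]; ring
  rw [e1, e2] at hsub
  have key : ∫ y in x..1, (y - x) ^ (σ - 1) * (1 - y) ^ m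
      = c * ∫ t in (0:ℝ)..1, (c * t + x - x) ^ (σ - 1) * (1 - (c * t + x)) ^ m := by
    rw [hsub, smul_eq_mul, ← mul_assoc, mul_inv_cancel₀ (ne_of_gt hc0), one_mul]
  rw [key]
  have congr1 : ∫ t in (0:ℝ)..1, (c * t + x - x) ^ (σ - 1) * (1 - (c * t + x)) ^ m
      = ∫ t in (0:ℝ)..1, (c ^ (σ - 1) * c ^ m) * (t ^ (σ - 1) * (1 - t) ^ m) := by
    apply intervalIntegral.integral_congr
    intro t ht
    rw [Set.uIcc_of_le (by norm_num : (0:ℝ) ≤ 1)] at ht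
    obtain ⟨ht0, ht1⟩ := ht
    show (c * t + x - x) ^ (σ - 1) * (1 - (c * t + x)) ^ m
        = c ^ (σ - 1) * c ^ m * (t ^ (σ - 1) * (1 - t) ^ m)
    have e3 : c * t + x - x = c * t := by ring
    have e4 : 1 - (c * t + x) = c * (1 - t) := by rw [hc]; ring
    rw [e3, e4, Real.mul_rpow (le_of_lt hc0) ht0, mul_pow]
    ring
  rw [congr1, intervalIntegral.integral_const_mul, betaR σ hσ0 m]
  have e5 : c * (c ^ (σ - 1) * c ^ m * (Real.Gamma σ * (m.factorial : ℝ) / Real.Gamma (σ + m + 1)))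
      = (c * c ^ (σ - 1)) * c ^ m * (Real.Gamma σ * (m.factorial : ℝ) / Real.Gamma (σ + m + 1)) := by
    ring
  rw [e5]
  congr 2
  rw [show c * c ^ (σ - 1) = c ^ (1:ℝ) * c ^ (σ - 1) by rw [Real.rpow_one],
    ← Real.rpow_add hc0]
  norm_num


lemma jacobiP_norm0 (n : ℕ) (y : ℝ) :
    jacobiP n 0 0 y = ∑ m ∈ Finset.range (n + 1),
      Real.Gamma ((n : ℝ) + 1) * Real.Gamma ((n : ℝ) + m + 1) /
        ((m.factorial : ℝ) * ((n - m).factorial : ℝ) * Real.Gamma ((n : ℝ) + 1) *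
          Real.Gamma ((m : ℝ) + 1)) * ((y - 1) / 2) ^ m := by
  rw [jacobiP_norm n 0 0 y (by ring)]
  simp only [zero_add]

lemma jacobiP_L_reflect (n : ℕ) (y : ℝ) :
    jacobiP n 0 0 (-y) = (-1 : ℝ) ^ n * jacobiP n 0 0 y := by
  have h := jacobiP_reflect n 0 y le_rfl one_pos
  simpa using h

lemma irEq (σ : ℝ) (hσ0 : 0 < σ) (n : ℕ) (x : ℝ) (hx2 : x < 1) :
    Ir σ (fun y => jacobiP n 0 0 y) x
      = (Real.Gamma ((n : ℝ) + 1) / Real.Gamma ((n : ℝ) + 1 + σ)) * (1 - x) ^ σ *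
        jacobiP n σ (-σ) x := by
  rw [Ir, if_neg (ne_of_gt hσ0)]
  set K : ℕ → ℝ := fun m => Real.Gamma ((n : ℝ) + 1) * Real.Gamma ((n : ℝ) + m + 1) /
      ((m.factorial : ℝ) * ((n - m).factorial : ℝ) * Real.Gamma ((n : ℝ) + 1) *
        Real.Gamma ((m : ℝ) + 1)) * (-1/2 : ℝ) ^ m with hK
  have expand : ∀ y : ℝ, (y - x) ^ (σ - 1) * jacobiP n 0 0 y
      = ∑ m ∈ Finset.range (n + 1), (y - x) ^ (σ - 1) * (K m * (1 - y) ^ m) := by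
    intro y
    rw [jacobiP_norm0, Finset.mul_sum]
    apply Finset.sum_congr rfl
    intro m _
    have hb : ((y - 1) / 2 : ℝ) ^ m = (-1/2 : ℝ) ^ m * (1 - y) ^ m := by
      rw [← mul_pow]
      congr 1
      ring
    rw [hK, hb]
    ring
  simp only [expand]
  rw [intervalIntegral.integral_finset_sum (fun m _ => irIntegrable σ x hσ0 (K m) m)]
  have term_val : ∀ m ∈ Finset.range (n + 1),
      (∫ y in x..1, (y - x) ^ (σ - 1) * (K m * (1 - y) ^ m))
      = K m * ((1 - x) ^ σ * (1 - x) ^ m *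
          (Real.Gamma σ * (m.factorial : ℝ) / Real.Gamma (σ + m + 1))) := by
    intro m _
    have hcongr : (∫ y in x..1, (y - x) ^ (σ - 1) * (K m * (1 - y) ^ m))
        = ∫ y in x..1, K m * ((y - x) ^ (σ - 1) * (1 - y) ^ m) := by
      apply intervalIntegral.integral_congr
      intro y _
      show (y - x) ^ (σ - 1) * (K m * (1 - y) ^ m) = K m * ((y - x) ^ (σ - 1) * (1 - y) ^ m)
      ring
    rw [hcongr, intervalIntegral.integral_const_mul, irCore σ x hσ0 hx2 m]
  rw [Finset.sum_congr rfl term_val]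
  rw [jacobiP_norm n σ (-σ) x (by ring), mul_assoc, Finset.mul_sum, Finset.mul_sum,
    Finset.mul_sum]
  apply Finset.sum_congr rfl
  intro m hm
  have hb : ((x - 1) / 2 : ℝ) ^ m = (-1/2 : ℝ) ^ m * (1 - x) ^ m := by
    rw [← mul_pow]
    congr 1
    ring
  simp only [hK]
  rw [hb]
  have e1 : Real.Gamma (σ + (n : ℝ) + 1) = Real.Gamma ((n : ℝ) + 1 + σ) := by
    congr 1; ring
  have e2 : Real.Gamma ((m : ℝ) + 1) = (m.factorial : ℝ) := Real.Gamma_nat_eq_factorial m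
  rw [e1, e2]
  have h1 : Real.Gamma σ ≠ 0 := ne_of_gt (Real.Gamma_pos_of_pos hσ0)
  have h2 : Real.Gamma (σ + (m : ℝ) + 1) ≠ 0 :=
    ne_of_gt (Real.Gamma_pos_of_pos (by positivity))
  have h3 : Real.Gamma ((n : ℝ) + 1) ≠ 0 :=
    ne_of_gt (Real.Gamma_pos_of_pos (by positivity))
  have h4 : Real.Gamma ((n : ℝ) + 1 + σ) ≠ 0 :=
    ne_of_gt (Real.Gamma_pos_of_pos (by positivity))
  have h5 : (m.factorial : ℝ) ≠ 0 := by positivity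
  have h6 : ((n - m).factorial : ℝ) ≠ 0 := by positivity
  field_simp

lemma ilEq (σ : ℝ) (hσ0 : 0 < σ) (hσ1 : σ < 1) (n : ℕ) (x : ℝ) (hx1 : -1 < x) :
    Il σ (fun y => jacobiP n 0 0 y) x
      = (Real.Gamma ((n : ℝ) + 1) / Real.Gamma ((n : ℝ) + 1 + σ)) * (1 + x) ^ σ *
        jacobiP n (-σ) σ x := by
  rw [Il, if_neg (ne_of_gt hσ0)]
  have flip : (∫ y in (-1 : ℝ)..x, (x - y) ^ (σ - 1) * jacobiP n 0 0 y)
      = ∫ y in (-x)..(1:ℝ), (x - (-y)) ^ (σ - 1) * jacobiP n 0 0 (-y) := by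
    rw [intervalIntegral.integral_comp_neg (fun y => (x - y) ^ (σ - 1) * jacobiP n 0 0 y)]
    norm_num
  rw [flip]
  have congr2 : (∫ y in (-x)..(1:ℝ), (x - (-y)) ^ (σ - 1) * jacobiP n 0 0 (-y))
      = ∫ y in (-x)..(1:ℝ), (-1 : ℝ) ^ n * ((y - (-x)) ^ (σ - 1) * jacobiP n 0 0 y) := by
    apply intervalIntegral.integral_congr
    intro y _
    show (x - (-y)) ^ (σ - 1) * jacobiP n 0 0 (-y)
        = (-1 : ℝ) ^ n * ((y - (-x)) ^ (σ - 1) * jacobiP n 0 0 y)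
    rw [jacobiP_L_reflect]
    have : x - (-y) = y - (-x) := by ring
    rw [this]
    ring
  rw [congr2, intervalIntegral.integral_const_mul]
  have hg : Real.Gamma σ ≠ 0 := ne_of_gt (Real.Gamma_pos_of_pos hσ0)
  have hIr := irEq σ hσ0 n (-x) (by linarith)
  rw [Ir, if_neg (ne_of_gt hσ0)] at hIr
  have key : (∫ y in (-x)..(1:ℝ), (y - (-x)) ^ (σ - 1) * jacobiP n 0 0 y)
      = Real.Gamma σ * ((Real.Gamma ((n : ℝ) + 1) / Real.Gamma ((n : ℝ) + 1 + σ)) *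
          (1 - (-x)) ^ σ * jacobiP n σ (-σ) (-x)) := by
    rw [← hIr]
    field_simp
  rw [key, jacobiP_reflect n σ x (le_of_lt hσ0) hσ1]
  have e1 : (1 - (-x) : ℝ) = 1 + x := by ring
  rw [e1]
  have hsq : (-1 : ℝ) ^ n * (-1 : ℝ) ^ n = 1 := by
    rw [← pow_add, ← two_mul, pow_mul]
    norm_num
  have expand2 : 1 / Real.Gamma σ * ((-1 : ℝ) ^ n * (Real.Gamma σ *
        (Real.Gamma ((n : ℝ) + 1) / Real.Gamma ((n : ℝ) + 1 + σ) * (1 + x) ^ σ *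
          ((-1 : ℝ) ^ n * jacobiP n (-σ) σ x))))
      = ((-1 : ℝ) ^ n * (-1 : ℝ) ^ n) * (Real.Gamma σ / Real.Gamma σ) *
          (Real.Gamma ((n : ℝ) + 1) / Real.Gamma ((n : ℝ) + 1 + σ) * (1 + x) ^ σ *
            jacobiP n (-σ) σ x) := by
    ring
  rw [expand2, hsq, div_self hg]
  ring

theorem statement15 (α : ℝ) (hα1 : 1 < α) (hα2 : α < 2)
    (n : ℕ) (x : ℝ) (hx : x ∈ Set.Ioo (-1 : ℝ) 1) :
    Il (2 - α) (fun y => jacobiP n 0 0 y) x =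
      (Real.Gamma (n + 1) / Real.Gamma (n + 3 - α)) * (1 + x) ^ (2 - α) *
        jacobiP n (α - 2) (2 - α) x ∧
    Ir (2 - α) (fun y => jacobiP n 0 0 y) x =
      (Real.Gamma (n + 1) / Real.Gamma (n + 3 - α)) * (1 - x) ^ (2 - α) *
        jacobiP n (2 - α) (α - 2) x := by
  obtain ⟨hx1, hx2⟩ := hx
  have hσ0 : (0 : ℝ) < 2 - α := by linarith
  have hσ1 : (2 - α : ℝ) < 1 := by linarith
  have eg : Real.Gamma ((n : ℝ) + 1 + (2 - α)) = Real.Gamma ((n : ℝ) + 3 - α) := by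
    congr 1; ring
  constructor
  · have h := ilEq (2 - α) hσ0 hσ1 n x hx1
    rw [eg] at h
    rw [h]
    have e : (α - 2 : ℝ) = -(2 - α) := by ring
    rw [e]
  · have h := irEq (2 - α) hσ0 n x hx2
    rw [eg] at h
    rw [h]
    have e : (α - 2 : ℝ) = -(2 - α) := by ring
    rw [e]
end
end
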